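/- Let η₁ ≥ ⋯ ≥ ηₙ be real numbers with ∑ η_i = 0 and ∑ η_i² = 1, where n > 2. If η₁ − η_{n−1} > 1, then η₂ − η_n ≤ 1. -/

import Mathlib

/-!
Since `(x - y)² ≤ 2 (x² + y²)`, a gap larger than `1` between two entries forces their
squares to sum to more than `1/2`. For `n ≥ 4` the two gaps involve four distinct entries,
whose squares would then sum to more than `1`. For `n = 3` the two gaps chain into a gap
larger than `2` between the first and the last entry, whose squares would sum to more
than `2`.
-/

open Finset

section

variable {ι : Type*} [Fintype ι] [DecidableEq ι] (f : ι → ℝ)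

theorem sq_sub_le_two_mul_sum_sq {i j : ι} (hij : i ≠ j) :
    (f i - f j) ^ 2 ≤ 2 * ∑ k, f k ^ 2 := by
  have hpair : f i ^ 2 + f j ^ 2 ≤ ∑ k, f k ^ 2 := by
    rw [← sum_pair (f := fun m => f m ^ 2) hij]
    exact sum_le_univ_sum_of_nonneg fun _ => sq_nonneg _
  nlinarith [sq_nonneg (f i + f j)]

theorem sq_sub_add_sq_sub_le_two_mul_sum_sq {i j k l : ι} (hij : i ≠ j) (hkl : k ≠ l)
    (hdisj : Disjoint ({i, j} : Finset ι) {k, l}) :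
    (f i - f j) ^ 2 + (f k - f l) ^ 2 ≤ 2 * ∑ m, f m ^ 2 := by
  have hpairs : (f i ^ 2 + f j ^ 2) + (f k ^ 2 + f l ^ 2) ≤ ∑ m, f m ^ 2 := by
    rw [← sum_pair (f := fun m => f m ^ 2) hij, ← sum_pair (f := fun m => f m ^ 2) hkl,
      ← sum_union hdisj]
    exact sum_le_univ_sum_of_nonneg fun _ => sq_nonneg _
  nlinarith [sq_nonneg (f i + f j), sq_nonneg (f k + f l)]

end

theorem stmt_2 (n : ℕ) (hn : 2 < n) (η : Fin n → ℝ)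
    (hsq : ∑ i, (η i) ^ 2 = 1)
    (hgap : η ⟨0, by omega⟩ - η ⟨n - 2, by omega⟩ > 1) :
    η ⟨1, by omega⟩ - η ⟨n - 1, by omega⟩ ≤ 1 := by
  by_contra! hgap'
  obtain rfl | hn4 : n = 3 ∨ 4 ≤ n := by omega
  · have hbound := sq_sub_le_two_mul_sum_sq η (i := 0) (j := 2) (by decide)
    change η 0 - η 1 > 1 at hgap
    change 1 < η 1 - η 2 at hgap'
    nlinarith
  · have hbound := sq_sub_add_sq_sub_le_two_mul_sum_sq η
      (i := ⟨0, by omega⟩) (j := ⟨n - 2, by omega⟩)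
      (k := ⟨1, by omega⟩) (l := ⟨n - 1, by omega⟩)
      (by simp [Fin.ext_iff]; omega) (by simp [Fin.ext_iff]; omega)
      (by simp [Fin.ext_iff]; omega)
    nlinarith
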